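/- arXiv:2202.13232 — 6 statements merged into one kernel-verified Lean document; each statement's English description precedes it below -/
import Mathlib

section
/- Let I be a minimal left ideal of (C,*). Then for every idempotent u ∈ I (i.e. u*u = u), the set u*I := {u*p : p ∈ I} is equal to the singleton {u}. (In other words, every ideal subgroup of such a convex compact left-continuous affine semigroup is trivial.) -/
/-!
Right multiplication by `g ∈ C` is a continuous affine self-map of the compact convex set `C`.
The Cesàro means of an orbit are moved by it only by `O(1/n)`, so any cluster point `a` of
them satisfies `a * g = a`. If `g ∈ u * I`, then `a ∈ I`, minimality gives `I = C * a`, hence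
`u = b * a` for some `b`, and `g = u * g = b * (a * g) = b * a = u`.
-/

/-- `I` is a left ideal of the semigroup `(C, mul)`: a nonempty subset of `C`
closed under left multiplication by elements of `C`. -/
def IsLeftIdeal {V : Type*} (C : Set V) (mul : V → V → V) (I : Set V) : Prop :=
  I.Nonempty ∧ I ⊆ C ∧ ∀ c ∈ C, ∀ i ∈ I, mul c i ∈ I

/-- `I` is a minimal left ideal of the semigroup `(C, mul)`. -/
def IsMinimalLeftIdeal {V : Type*} (C : Set V) (mul : V → V → V) (I : Set V) : Prop :=
  IsLeftIdeal C mul I ∧ ∀ J : Set V, IsLeftIdeal C mul J → J ⊆ I → J = I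

open Filter Topology Function

section Cesaro

variable {V : Type*} [AddCommGroup V] [Module ℝ V]

noncomputable def cesaroMean (P : ℕ → V) (n : ℕ) : V :=
  ((n : ℝ) + 1)⁻¹ • ∑ k ∈ Finset.range (n + 1), P k

def IsAffineOn (C : Set V) (f : V → V) : Prop :=
  ∀ a ∈ C, ∀ b ∈ C, ∀ r : ℝ, 0 ≤ r → r ≤ 1 → f (r • a + (1 - r) • b) = r • f a + (1 - r) • f b

theorem cesaroMean_zero (P : ℕ → V) : cesaroMean P 0 = P 0 := by
  simp [cesaroMean]

theorem cesaroMean_succ (P : ℕ → V) (n : ℕ) :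
    cesaroMean P (n + 1) =
      ((n : ℝ) + 2)⁻¹ • P (n + 1) + (1 - ((n : ℝ) + 2)⁻¹) • cesaroMean P n := by
  have hweight : (1 - ((n : ℝ) + 2)⁻¹) * ((n : ℝ) + 1)⁻¹ = ((n : ℝ) + 2)⁻¹ := by
    field_simp; ring
  rw [cesaroMean, cesaroMean, smul_smul, hweight, Finset.sum_range_succ, smul_add, add_comm]
  norm_num [add_assoc, one_add_one_eq_two]

theorem inv_natCast_add_two_mem_Icc (n : ℕ) : ((n : ℝ) + 2)⁻¹ ∈ Set.Icc (0 : ℝ) 1 :=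
  ⟨by positivity, inv_le_one_of_one_le₀ (by linarith [n.cast_nonneg (α := ℝ)])⟩

theorem Convex.cesaroMean_mem {C : Set V} (hC : Convex ℝ C) {P : ℕ → V} (hP : ∀ k, P k ∈ C)
    (n : ℕ) : cesaroMean P n ∈ C := by
  induction n with
  | zero => rw [cesaroMean_zero]; exact hP 0
  | succ n ih =>
    rw [cesaroMean_succ]
    obtain ⟨h0, h1⟩ := inv_natCast_add_two_mem_Icc n
    exact hC (hP _) ih h0 (sub_nonneg.2 h1) (add_sub_cancel _ _)

theorem IsAffineOn.map_cesaroMean {C : Set V} {f : V → V} (hf : IsAffineOn C f)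
    (hC : Convex ℝ C) {P : ℕ → V} (hP : ∀ k, P k ∈ C) (n : ℕ) :
    f (cesaroMean P n) = cesaroMean (f ∘ P) n := by
  induction n with
  | zero => simp [cesaroMean_zero]
  | succ n ih =>
    obtain ⟨h0, h1⟩ := inv_natCast_add_two_mem_Icc n
    rw [cesaroMean_succ, cesaroMean_succ, hf _ (hP _) _ (hC.cesaroMean_mem hP n) _ h0 h1, ih]
    rfl

theorem cesaroMean_shift_sub (P : ℕ → V) (n : ℕ) :
    cesaroMean (fun k => P (k + 1)) n - cesaroMean P n = ((n : ℝ) + 1)⁻¹ • (P (n + 1) - P 0) := by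
  rw [cesaroMean, cesaroMean, ← smul_sub, ← Finset.sum_sub_distrib, Finset.sum_range_sub]

end Cesaro

theorem IsCompact.exists_isFixedPt_of_tendsto_sub {X : Type*} [AddCommGroup X]
    [TopologicalSpace X] [ContinuousAdd X] [T2Space X] {C : Set X} (hC : IsCompact C)
    {f : X → X} (hf : ContinuousOn f C) {A : ℕ → X} (hA : ∀ n, A n ∈ C)
    (hfA : Tendsto (fun n => f (A n) - A n) atTop (𝓝 0)) : ∃ a ∈ C, IsFixedPt f a := by
  let U : Ultrafilter ℕ := Ultrafilter.of atTop
  obtain ⟨a, haC, hAa⟩ := hC.ultrafilter_le_nhds (U.map A)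
    (le_principal_iff.2 (mem_map.2 (univ_mem' hA)))
  have hAa : Tendsto A U (𝓝 a) := hAa
  have hfAa : Tendsto (fun n => f (A n)) U (𝓝 (f a)) :=
    (hf a haC).tendsto.comp (tendsto_nhdsWithin_iff.2 ⟨hAa, Eventually.of_forall hA⟩)
  have hfAa' : Tendsto (fun n => f (A n)) U (𝓝 a) := by
    simpa only [add_sub_cancel, add_zero] using hAa.add (hfA.mono_left (Ultrafilter.of_le atTop))
  exact ⟨a, haC, tendsto_nhds_unique hfAa hfAa'⟩

section FixedPoint

variable {V : Type*} [AddCommGroup V] [Module ℝ V] [TopologicalSpace V]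
  [IsTopologicalAddGroup V] [ContinuousSMul ℝ V]

theorem tendsto_cesaroMean_shift_sub_zero {S : Set V} (hS : IsCompact S) {P : ℕ → V}
    (hP : ∀ k, P k ∈ S) :
    Tendsto (fun n => cesaroMean (fun k => P (k + 1)) n - cesaroMean P n) atTop (𝓝 0) := by
  simp only [cesaroMean_shift_sub]
  refine ((hS.isVonNBounded ℝ).sub (hS.isVonNBounded ℝ)).smul_tendsto_zero
    (Eventually.of_forall fun n => Set.sub_mem_sub (hP (n + 1)) (hP 0)) ?_
  simpa only [one_div] using tendsto_one_div_add_atTop_nhds_zero_nat (𝕜 := ℝ)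

theorem exists_isFixedPt_of_isAffineOn [T2Space V] {C : Set V} (hCcomp : IsCompact C)
    (hCconv : Convex ℝ C) (hCne : C.Nonempty) {f : V → V} (hfC : Set.MapsTo f C C)
    (hf : ContinuousOn f C) (hfaff : IsAffineOn C f) : ∃ a ∈ C, IsFixedPt f a := by
  obtain ⟨x, hx⟩ := hCne
  have horbit : ∀ k, f^[k] x ∈ C := fun k => hfC.iterate k hx
  refine hCcomp.exists_isFixedPt_of_tendsto_sub hf (hCconv.cesaroMean_mem horbit) ?_
  simp only [hfaff.map_cesaroMean hCconv horbit]
  simpa [Function.comp_def, Function.iterate_succ_apply'] using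
    tendsto_cesaroMean_shift_sub_zero hCcomp horbit

end FixedPoint

section LeftIdeal

variable {V : Type*} {C : Set V} {mul : V → V → V}

theorem isLeftIdeal_image_mul_right (hclosed : ∀ p ∈ C, ∀ q ∈ C, mul p q ∈ C)
    (hassoc : ∀ p ∈ C, ∀ q ∈ C, ∀ r ∈ C, mul (mul p q) r = mul p (mul q r))
    {a : V} (ha : a ∈ C) : IsLeftIdeal C mul ((fun c => mul c a) '' C) := by
  refine ⟨⟨mul a a, a, ha, rfl⟩, ?_, ?_⟩
  · rintro _ ⟨c, hc, rfl⟩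
    exact hclosed c hc a ha
  · rintro c hc _ ⟨c', hc', rfl⟩
    exact ⟨mul c c', hclosed c hc c' hc', hassoc c hc c' hc' a ha⟩

theorem IsMinimalLeftIdeal.image_mul_right_eq {I : Set V} (hI : IsMinimalLeftIdeal C mul I)
    (hclosed : ∀ p ∈ C, ∀ q ∈ C, mul p q ∈ C)
    (hassoc : ∀ p ∈ C, ∀ q ∈ C, ∀ r ∈ C, mul (mul p q) r = mul p (mul q r))
    {a : V} (ha : a ∈ I) : (fun c => mul c a) '' C = I :=
  hI.2 _ (isLeftIdeal_image_mul_right hclosed hassoc (hI.1.2.1 ha)) <| by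
    rintro _ ⟨c, hc, rfl⟩
    exact hI.1.2.2 c hc a ha

end LeftIdeal

theorem ideal_subgroup_trivial_general
    {V : Type*} [AddCommGroup V] [Module ℝ V] [TopologicalSpace V]
    [IsTopologicalAddGroup V] [ContinuousSMul ℝ V] [T2Space V]
    (C : Set V) (hCcomp : IsCompact C) (hCconv : Convex ℝ C)
    (mul : V → V → V)
    (hclosed : ∀ p ∈ C, ∀ q ∈ C, mul p q ∈ C)
    (hassoc : ∀ p ∈ C, ∀ q ∈ C, ∀ r ∈ C, mul (mul p q) r = mul p (mul q r))
    (hcont : ∀ q ∈ C, ContinuousOn (fun p => mul p q) C)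
    (haffl : ∀ q ∈ C, ∀ a ∈ C, ∀ b ∈ C, ∀ r : ℝ, 0 ≤ r → r ≤ 1 →
      mul (r • a + (1 - r) • b) q = r • mul a q + (1 - r) • mul b q)
    (I : Set V) (hI : IsMinimalLeftIdeal C mul I)
    (u : V) (hu : u ∈ I) (huid : mul u u = u) :
    (fun p => mul u p) '' I = {u} := by
  obtain ⟨-, hIC, hIideal⟩ := hI.1
  have huC : u ∈ C := hIC hu
  refine Set.eq_singleton_iff_unique_mem.2 ⟨⟨u, hu, huid⟩, ?_⟩
  rintro _ ⟨p, hp, rfl⟩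
  set g := mul u p
  have hgI : g ∈ I := hIideal u huC p hp
  have hgC : g ∈ C := hIC hgI
  have hug : mul u g = g := by rw [← hassoc u huC u huC p (hIC hp), huid]
  obtain ⟨a, haC, hag⟩ := exists_isFixedPt_of_isAffineOn hCcomp hCconv ⟨g, hgC⟩
    (fun x hx => hclosed x hx g hgC) (hcont g hgC) (haffl g hgC)
  have haI : a ∈ I := hag ▸ hIideal a haC g hgI
  obtain ⟨b, hbC, hba⟩ : u ∈ (fun c => mul c a) '' C := by
    rwa [hI.image_mul_right_eq hclosed hassoc haI]
  calc g = mul u g := hug.symm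
    _ = mul (mul b a) g := by rw [← hba]
    _ = mul b (mul a g) := hassoc b hbC a haC g hgC
    _ = u := by rw [hag.eq, ← hba]

/-- The ideal subgroup `u*I` of a minimal left ideal of a compact convex
left-continuous affine semigroup is trivial: `u*I = {u}`. -/
theorem ideal_subgroup_trivial
    {V : Type*} [AddCommGroup V] [Module ℝ V] [TopologicalSpace V]
    [IsTopologicalAddGroup V] [ContinuousSMul ℝ V] [T2Space V] [LocallyConvexSpace ℝ V]
    (C : Set V) (hCne : C.Nonempty) (hCcomp : IsCompact C) (hCconv : Convex ℝ C)
    (mul : V → V → V)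
    (hclosed : ∀ p ∈ C, ∀ q ∈ C, mul p q ∈ C)
    (hassoc : ∀ p ∈ C, ∀ q ∈ C, ∀ r ∈ C, mul (mul p q) r = mul p (mul q r))
    (hcont : ∀ q ∈ C, ContinuousOn (fun p => mul p q) C)
    (haffl : ∀ q ∈ C, ∀ a ∈ C, ∀ b ∈ C, ∀ r : ℝ, 0 ≤ r → r ≤ 1 →
      mul (r • a + (1 - r) • b) q = r • mul a q + (1 - r) • mul b q)
    (haffr : ∀ p ∈ C, ∀ a ∈ C, ∀ b ∈ C, ∀ r : ℝ, 0 ≤ r → r ≤ 1 →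
      mul p (r • a + (1 - r) • b) = r • mul p a + (1 - r) • mul p b)
    (I : Set V) (hI : IsMinimalLeftIdeal C mul I)
    (u : V) (hu : u ∈ I) (huid : mul u u = u) :
    (fun p => mul u p) '' I = {u} :=
  ideal_subgroup_trivial_general C hCcomp hCconv mul hclosed hassoc hcont haffl I hI u hu huid
end

section
/- Let I be a minimal left ideal of (C,*). Then every element of I is idempotent, and moreover for all μ, ν ∈ I one has μ*ν = μ. -/
/-! The right translation `μ ↦ μ * ν` by an element `ν` of the minimal left ideal `I` maps `C`
onto the left ideal `C * ν ⊆ I`, so by minimality `I = C * ν` is compact and convex. The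
translation is a continuous affine self-map of `I`, hence has a fixed point, found as a cluster
point of its Cesàro averages. The set of its fixed points in `I` is again a left ideal
(`(c * μ) * ν = c * (μ * ν) = c * μ`), so by minimality every `μ ∈ I` satisfies `μ * ν = μ`. -/

open Filter Topology Function Pointwise

theorem IsCompact.exists_isFixedPt_of_tendsto_sub_s1 {V : Type*} [AddCommGroup V]
    [TopologicalSpace V] [IsTopologicalAddGroup V] [T2Space V] {K : Set V} {T : V → V}
    (hK : IsCompact K) (hT : ContinuousOn T K) {x : ℕ → V} (hx : ∀ n, x n ∈ K)
    (hfix : Tendsto (fun n => T (x n) - x n) atTop (𝓝 0)) : ∃ z ∈ K, IsFixedPt T z := by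
  have hxK : Tendsto x atTop (𝓟 K) := tendsto_principal.2 (.of_forall hx)
  obtain ⟨z, hzK, hz⟩ := hK.exists_mapClusterPt hxK
  obtain ⟨U, hUle, hxz⟩ := mapClusterPt_iff_ultrafilter.1 hz
  have hxzK : Tendsto x U (𝓝[K] z) := tendsto_nhdsWithin_iff.2 ⟨hxz, .of_forall hx⟩
  have hTz : Tendsto (fun n => T (x n) - x n) U (𝓝 (T z - z)) :=
    ((hT z hzK).tendsto.comp hxzK).sub hxz
  exact ⟨z, hzK, sub_eq_zero.1 (tendsto_nhds_unique hTz (hfix.mono_left hUle))⟩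

section AffineFixedPoint

variable {V : Type*} [AddCommGroup V] [Module ℝ V]

def AffineOn (K : Set V) (T : V → V) : Prop :=
  ∀ a ∈ K, ∀ b ∈ K, ∀ r : ℝ, 0 ≤ r → r ≤ 1 → T (r • a + (1 - r) • b) = r • T a + (1 - r) • T b

variable {K L : Set V} {T : V → V}

theorem AffineOn.mono (hT : AffineOn K T) (hLK : L ⊆ K) : AffineOn L T :=
  fun a ha b hb => hT a (hLK ha) b (hLK hb)

theorem AffineOn.convex_image (hT : AffineOn K T) (hK : Convex ℝ K) : Convex ℝ (T '' K) := by
  rintro _ ⟨a, ha, rfl⟩ _ ⟨b, hb, rfl⟩ r s hr hs hrs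
  obtain rfl : s = 1 - r := by linarith
  exact ⟨r • a + (1 - r) • b, hK ha hb hr hs (by ring), hT a ha b hb r hr (by linarith)⟩

/-- `cesaroAverage T x₀ n = (n + 1)⁻¹ • ∑ k ≤ n, T^[k] x₀`, written recursively as a two-point
convex combination so that two-point affinity of `T` suffices. -/
noncomputable def cesaroAverage (T : V → V) (x₀ : V) : ℕ → V
  | 0 => x₀
  | n + 1 => ((n + 1 : ℝ) / (n + 2)) • cesaroAverage T x₀ n + ((n : ℝ) + 2)⁻¹ • T^[n + 1] x₀

theorem one_sub_succ_div_succ_succ (n : ℕ) : 1 - ((n + 1 : ℝ) / (n + 2)) = ((n : ℝ) + 2)⁻¹ := by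
  field_simp; ring

theorem succ_div_succ_succ_mem_Icc (n : ℕ) : (n + 1 : ℝ) / (n + 2) ∈ Set.Icc (0 : ℝ) 1 :=
  ⟨by positivity, (div_le_one (by positivity)).2 (by linarith)⟩

theorem cesaroAverage_mem (hK : Convex ℝ K) (hT : Set.MapsTo T K K) {x₀ : V} (hx₀ : x₀ ∈ K) :
    ∀ n, cesaroAverage T x₀ n ∈ K
  | 0 => hx₀
  | n + 1 => by
    obtain ⟨h0, h1⟩ := succ_div_succ_succ_mem_Icc n
    rw [cesaroAverage, ← one_sub_succ_div_succ_succ]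
    exact hK (cesaroAverage_mem hK hT hx₀ n) (hT.iterate (n + 1) hx₀) h0 (by linarith) (by ring)

theorem AffineOn.map_cesaroAverage (hT : AffineOn K T) (hK : Convex ℝ K)
    (hTK : Set.MapsTo T K K) {x₀ : V} (hx₀ : x₀ ∈ K) :
    ∀ n : ℕ, T (cesaroAverage T x₀ n) =
      cesaroAverage T x₀ n + ((n : ℝ) + 1)⁻¹ • (T^[n + 1] x₀ - x₀)
  | 0 => by simp [cesaroAverage]
  | n + 1 => by
    obtain ⟨h0, h1⟩ := succ_div_succ_succ_mem_Icc n
    rw [cesaroAverage, ← one_sub_succ_div_succ_succ,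
      hT _ (cesaroAverage_mem hK hTK hx₀ n) _ (hTK.iterate (n + 1) hx₀) _ h0 h1,
      hT.map_cesaroAverage hK hTK hx₀ n, one_sub_succ_div_succ_succ, ← iterate_succ_apply' T]
    push_cast
    match_scalars <;> field_simp <;> ring

variable [TopologicalSpace V] [IsTopologicalAddGroup V] [ContinuousSMul ℝ V]

theorem AffineOn.tendsto_map_cesaroAverage_sub (hT : AffineOn K T) (hK : IsCompact K)
    (hKc : Convex ℝ K) (hTK : Set.MapsTo T K K) {x₀ : V} (hx₀ : x₀ ∈ K) :
    Tendsto (fun n => T (cesaroAverage T x₀ n) - cesaroAverage T x₀ n) atTop (𝓝 0) := by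
  have hbdd : Bornology.IsVonNBounded ℝ (K - K) :=
    (hK.isVonNBounded ℝ).sub (hK.isVonNBounded ℝ)
  have hinv : Tendsto (fun n : ℕ => ((n : ℝ) + 1)⁻¹) atTop (𝓝 0) := by
    simpa [one_div] using tendsto_one_div_add_atTop_nhds_zero_nat (𝕜 := ℝ)
  refine (hbdd.smul_tendsto_zero (.of_forall fun n =>
    Set.sub_mem_sub (hTK.iterate (n + 1) hx₀) hx₀) hinv).congr fun n => ?_
  rw [Pi.smul_apply', hT.map_cesaroAverage hKc hTK hx₀, add_sub_cancel_left]

theorem AffineOn.exists_isFixedPt [T2Space V] (hT : AffineOn K T) (hK : IsCompact K)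
    (hKc : Convex ℝ K) (hne : K.Nonempty) (hTK : Set.MapsTo T K K) (hTc : ContinuousOn T K) :
    ∃ z ∈ K, IsFixedPt T z :=
  let ⟨_, hx₀⟩ := hne
  hK.exists_isFixedPt_of_tendsto_sub_s1 hTc (cesaroAverage_mem hKc hTK hx₀)
    (hT.tendsto_map_cesaroAverage_sub hK hKc hTK hx₀)

end AffineFixedPoint

namespace IsMinimalLeftIdeal

variable {V : Type*} {C I : Set V} {mul : V → V → V}

theorem image_mul_right_eq_s1 (hI : IsMinimalLeftIdeal C mul I)
    (hclosed : ∀ p ∈ C, ∀ q ∈ C, mul p q ∈ C)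
    (hassoc : ∀ p ∈ C, ∀ q ∈ C, ∀ r ∈ C, mul (mul p q) r = mul p (mul q r))
    {ν : V} (hν : ν ∈ I) : (fun p => mul p ν) '' C = I := by
  obtain ⟨⟨hIne, hIC, hIideal⟩, hmin⟩ := hI
  have hsub : (fun p => mul p ν) '' C ⊆ I := by
    rintro _ ⟨p, hp, rfl⟩
    exact hIideal p hp ν hν
  refine hmin _ ⟨(hIne.mono hIC).image _, hsub.trans hIC, ?_⟩ hsub
  rintro c hc _ ⟨p, hp, rfl⟩
  exact ⟨mul c p, hclosed c hc p hp, hassoc c hc p hp ν (hIC hν)⟩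

theorem forall_mul_right_eq_self (hI : IsMinimalLeftIdeal C mul I)
    (hassoc : ∀ p ∈ C, ∀ q ∈ C, ∀ r ∈ C, mul (mul p q) r = mul p (mul q r))
    {ν : V} (hν : ν ∈ C) (hfix : ∃ μ ∈ I, mul μ ν = μ) : ∀ μ ∈ I, mul μ ν = μ := by
  obtain ⟨⟨-, hIC, hIideal⟩, hmin⟩ := hI
  have hFix : {μ ∈ I | mul μ ν = μ} = I := by
    refine hmin _ ⟨hfix, fun μ hμ => hIC hμ.1, ?_⟩ fun μ hμ => hμ.1
    rintro c hc μ ⟨hμI, hμν⟩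
    exact ⟨hIideal c hc μ hμI, by rw [hassoc c hc μ (hIC hμI) ν hν, hμν]⟩
  exact fun μ hμ => (hFix.symm ▸ hμ : μ ∈ {μ ∈ I | mul μ ν = μ}).2

end IsMinimalLeftIdeal

theorem minimal_left_ideal_all_idempotent_general
    {V : Type*} [AddCommGroup V] [Module ℝ V] [TopologicalSpace V]
    [IsTopologicalAddGroup V] [ContinuousSMul ℝ V] [T2Space V]
    (C : Set V) (hCcomp : IsCompact C) (hCconv : Convex ℝ C)
    (mul : V → V → V)
    (hclosed : ∀ p ∈ C, ∀ q ∈ C, mul p q ∈ C)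
    (hassoc : ∀ p ∈ C, ∀ q ∈ C, ∀ r ∈ C, mul (mul p q) r = mul p (mul q r))
    (hcont : ∀ q ∈ C, ContinuousOn (fun p => mul p q) C)
    (haffl : ∀ q ∈ C, ∀ a ∈ C, ∀ b ∈ C, ∀ r : ℝ, 0 ≤ r → r ≤ 1 →
      mul (r • a + (1 - r) • b) q = r • mul a q + (1 - r) • mul b q)
    (I : Set V) (hI : IsMinimalLeftIdeal C mul I) :
    (∀ μ ∈ I, mul μ μ = μ) ∧ (∀ μ ∈ I, ∀ ν ∈ I, mul μ ν = μ) := by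
  have hIC : I ⊆ C := hI.1.2.1
  have right_absorbs : ∀ ν ∈ I, ∀ μ ∈ I, mul μ ν = μ := by
    intro ν hν
    have hνC : ν ∈ C := hIC hν
    have haff : AffineOn C (fun p => mul p ν) := haffl ν hνC
    have hCν : (fun p => mul p ν) '' C = I := hI.image_mul_right_eq_s1 hclosed hassoc hν
    have hIcomp : IsCompact I := hCν ▸ hCcomp.image_of_continuousOn (hcont ν hνC)
    have hIconv : Convex ℝ I := hCν ▸ haff.convex_image hCconv
    obtain ⟨μ₀, hμ₀, hfix⟩ := (haff.mono hIC).exists_isFixedPt hIcomp hIconv hI.1.1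
      (fun μ hμ => hI.1.2.2 μ (hIC hμ) ν hν) ((hcont ν hνC).mono hIC)
    exact hI.forall_mul_right_eq_self hassoc hνC ⟨μ₀, hμ₀, hfix⟩
  exact ⟨fun μ hμ => right_absorbs μ hμ μ hμ, fun μ hμ ν hν => right_absorbs ν hν μ hμ⟩

/-- In a minimal left ideal of a compact convex left-continuous affine semigroup,
every element is idempotent and moreover `μ * ν = μ` for all `μ, ν` in the ideal. -/
theorem minimal_left_ideal_all_idempotent
    {V : Type*} [AddCommGroup V] [Module ℝ V] [TopologicalSpace V]
    [IsTopologicalAddGroup V] [ContinuousSMul ℝ V] [T2Space V] [LocallyConvexSpace ℝ V]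
    (C : Set V) (hCne : C.Nonempty) (hCcomp : IsCompact C) (hCconv : Convex ℝ C)
    (mul : V → V → V)
    (hclosed : ∀ p ∈ C, ∀ q ∈ C, mul p q ∈ C)
    (hassoc : ∀ p ∈ C, ∀ q ∈ C, ∀ r ∈ C, mul (mul p q) r = mul p (mul q r))
    (hcont : ∀ q ∈ C, ContinuousOn (fun p => mul p q) C)
    (haffl : ∀ q ∈ C, ∀ a ∈ C, ∀ b ∈ C, ∀ r : ℝ, 0 ≤ r → r ≤ 1 →
      mul (r • a + (1 - r) • b) q = r • mul a q + (1 - r) • mul b q)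
    (haffr : ∀ p ∈ C, ∀ a ∈ C, ∀ b ∈ C, ∀ r : ℝ, 0 ≤ r → r ≤ 1 →
      mul p (r • a + (1 - r) • b) = r • mul p a + (1 - r) • mul p b)
    (I : Set V) (hI : IsMinimalLeftIdeal C mul I) :
    (∀ μ ∈ I, mul μ μ = μ) ∧ (∀ μ ∈ I, ∀ ν ∈ I, mul μ ν = μ) :=
  minimal_left_ideal_all_idempotent_general C hCcomp hCconv mul hclosed hassoc hcont haffl I hI
end

section
/- For every minimal left ideal I of (C,*) there exists an idempotent u ∈ I (i.e. u*u = u) such that u is an extreme point of the set u*I := {u*p : p ∈ I}. -/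
/-- `x` is an extreme point of `A`: `x ∈ A` and `x` cannot be written as a proper
convex combination of two distinct points of `A`. -/
def IsExtremePt {V : Type*} [AddCommGroup V] [Module ℝ V] (A : Set V) (x : V) : Prop :=
  x ∈ A ∧ ∀ a ∈ A, ∀ b ∈ A, ∀ r : ℝ, 0 < r → r < 1 → x = r • a + (1 - r) • b → a = b

open Set

section Semigroup

variable {V : Type*} {C I : Set V} {mul : V → V → V}

def AssocOn (S : Set V) (mul : V → V → V) : Prop :=
  ∀ p ∈ S, ∀ q ∈ S, ∀ r ∈ S, mul (mul p q) r = mul p (mul q r)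

theorem AssocOn.mono {S T : Set V} (h : AssocOn T mul) (hST : S ⊆ T) : AssocOn S mul :=
  fun p hp q hq r hr => h p (hST hp) q (hST hq) r (hST hr)

theorem IsMinimalLeftIdeal.image_mul_right_eq_self (hI : IsMinimalLeftIdeal C mul I)
    (hassoc : AssocOn C mul) {x : V} (hx : x ∈ I) : (fun p => mul p x) '' I = I := by
  obtain ⟨⟨-, hIC, hideal⟩, hmin⟩ := hI
  have hsub : (fun p => mul p x) '' I ⊆ I := image_subset_iff.2 fun p hp => hideal p (hIC hp) x hx
  refine hmin _ ⟨⟨mul x x, x, hx, rfl⟩, hsub.trans hIC, ?_⟩ hsub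
  rintro c hc _ ⟨p, hp, rfl⟩
  exact ⟨mul c p, hideal c hc p hp, hassoc c hc p (hIC hp) x (hIC hx)⟩

theorem IsMinimalLeftIdeal.exists_mul_eq (hI : IsMinimalLeftIdeal C mul I)
    (hassoc : AssocOn C mul) {x y : V} (hx : x ∈ I) (hy : y ∈ I) : ∃ c ∈ I, mul c x = y := by
  rwa [← hI.image_mul_right_eq_self hassoc hx] at hy

theorem IsMinimalLeftIdeal.image_carrier_mul_right_eq (hI : IsMinimalLeftIdeal C mul I)
    (hassoc : AssocOn C mul) {x : V} (hx : x ∈ I) : (fun p => mul p x) '' C = I :=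
  (image_subset_iff.2 fun c hc => hI.1.2.2 c hc x hx).antisymm
    (hI.image_mul_right_eq_self hassoc hx ▸ image_mono hI.1.2.1)

variable {u : V}

theorem IsLeftIdeal.image_mul_left_subset (hI : IsLeftIdeal C mul I) (hu : u ∈ C) :
    mul u '' I ⊆ I :=
  image_subset_iff.2 fun p hp => hI.2.2 u hu p hp

theorem IsLeftIdeal.mul_mem_image_mul_left (hI : IsLeftIdeal C mul I)
    (hassoc : AssocOn C mul) (hu : u ∈ C) {g h : V} (hg : g ∈ mul u '' I) (hh : h ∈ I) :
    mul g h ∈ mul u '' I := by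
  obtain ⟨p, hp, rfl⟩ := hg
  exact ⟨mul p h, hI.2.2 p (hI.2.1 hp) h hh, (hassoc u hu p (hI.2.1 hp) h (hI.2.1 hh)).symm⟩

theorem IsLeftIdeal.idempotent_mul_eq_of_mem_image (hI : IsLeftIdeal C mul I)
    (hassoc : AssocOn C mul) (hu : u ∈ C) (huu : mul u u = u) {g : V}
    (hg : g ∈ mul u '' I) : mul u g = g := by
  obtain ⟨p, hp, rfl⟩ := hg
  rw [← hassoc u hu u hu p (hI.2.1 hp), huu]

theorem IsMinimalLeftIdeal.exists_mul_eq_idempotent (hI : IsMinimalLeftIdeal C mul I)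
    (hassoc : AssocOn C mul) (huI : u ∈ I) (huu : mul u u = u) {g : V} (hg : g ∈ mul u '' I) :
    ∃ y ∈ mul u '' I, mul y g = u := by
  have hIC := hI.1.2.1
  have hgI := hI.1.image_mul_left_subset (hIC huI) hg
  obtain ⟨c, hcI, hcg⟩ := hI.exists_mul_eq hassoc hgI huI
  exact ⟨mul u c, mem_image_of_mem _ hcI, by
    rw [hassoc u (hIC huI) c (hIC hcI) g (hIC hgI), hcg, huu]⟩

theorem IsMinimalLeftIdeal.mul_left_cancel_of_mem_image_idempotent
    (hI : IsMinimalLeftIdeal C mul I) (hassoc : AssocOn C mul) (huI : u ∈ I)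
    (huu : mul u u = u) {g a b : V} (hg : g ∈ mul u '' I)
    (ha : a ∈ mul u '' I) (hb : b ∈ mul u '' I) (hab : mul g a = mul g b) : a = b := by
  have hsub : mul u '' I ⊆ C := (hI.1.image_mul_left_subset (hI.1.2.1 huI)).trans hI.1.2.1
  have hid : ∀ g ∈ mul u '' I, mul u g = g := fun _ =>
    hI.1.idempotent_mul_eq_of_mem_image hassoc (hI.1.2.1 huI) huu
  obtain ⟨y, hy, hyg⟩ := hI.exists_mul_eq_idempotent hassoc huI huu hg
  calc a = mul (mul y g) a := by rw [hyg, hid a ha]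
    _ = mul (mul y g) b := by
      rw [hassoc y (hsub hy) g (hsub hg) a (hsub ha), hab,
        hassoc y (hsub hy) g (hsub hg) b (hsub hb)]
    _ = b := by rw [hyg, hid b hb]

theorem IsMinimalLeftIdeal.mul_idempotent_eq_of_mem_image (hI : IsMinimalLeftIdeal C mul I)
    (hassoc : AssocOn C mul) (huI : u ∈ I) (huu : mul u u = u) {g : V}
    (hg : g ∈ mul u '' I) : mul g u = g := by
  have hsub : mul u '' I ⊆ C := (hI.1.image_mul_left_subset (hI.1.2.1 huI)).trans hI.1.2.1
  obtain ⟨y, hy, hyg⟩ := hI.exists_mul_eq_idempotent hassoc huI huu hg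
  refine hI.mul_left_cancel_of_mem_image_idempotent hassoc huI huu hy
    (hI.1.mul_mem_image_mul_left hassoc (hI.1.2.1 huI) hg huI) hg ?_
  rw [← hassoc y (hsub hy) g (hsub hg) u (hI.1.2.1 huI), hyg, huu]

theorem IsMinimalLeftIdeal.isExtremePt_image_idempotent [AddCommGroup V] [Module ℝ V]
    (hI : IsMinimalLeftIdeal C mul I)
    (hassoc : AssocOn C mul) {x : V} (hx : x ∈ I.extremePoints ℝ)
    (haffx : ∀ a ∈ C, ∀ b ∈ C, ∀ r : ℝ, 0 ≤ r → r ≤ 1 →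
      mul x (r • a + (1 - r) • b) = r • mul x a + (1 - r) • mul x b)
    (huI : u ∈ I) (huu : mul u u = u) (hux : mul u x = x) : IsExtremePt (mul u '' I) u := by
  obtain ⟨-, hIC, hideal⟩ := hI.1
  have hsubI := hI.1.image_mul_left_subset (hIC huI)
  have hxG : x ∈ mul u '' I := ⟨x, hx.1, hux⟩
  refine ⟨⟨u, huI, huu⟩, fun a ha b hb r hr0 hr1 hu => ?_⟩
  have hxu : x = r • mul x a + (1 - r) • mul x b := by
    rw [← haffx a (hIC (hsubI ha)) b (hIC (hsubI hb)) r hr0.le hr1.le, ← hu,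
      hI.mul_idempotent_eq_of_mem_image hassoc huI huu hxG]
  have hseg : x ∈ openSegment ℝ (mul x a) (mul x b) :=
    ⟨r, 1 - r, hr0, sub_pos.2 hr1, add_sub_cancel r 1, hxu.symm⟩
  obtain ⟨hxa, hxb⟩ := (mem_extremePoints.1 hx).2 _ (hideal x (hIC hx.1) a (hsubI ha))
    _ (hideal x (hIC hx.1) b (hsubI hb)) hseg
  exact hI.mul_left_cancel_of_mem_image_idempotent hassoc huI huu hxG ha hb (hxa.trans hxb.symm)

end Semigroup

section Topology

variable {V : Type*} [TopologicalSpace V] {C I : Set V} {mul : V → V → V}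

theorem IsMinimalLeftIdeal.isCompact (hI : IsMinimalLeftIdeal C mul I) (hC : IsCompact C)
    (hassoc : AssocOn C mul) (hcont : ∀ q ∈ C, ContinuousOn (fun p => mul p q) C) :
    IsCompact I := by
  obtain ⟨x, hx⟩ := hI.1.1
  rw [← hI.image_carrier_mul_right_eq hassoc hx]
  exact hC.image_of_continuousOn (hcont x (hI.1.2.1 hx))

variable [T2Space V]

theorem IsCompact.exists_idempotent {S : Set V} (hS : IsCompact S) (hne : S.Nonempty)
    (hmul : ∀ p ∈ S, ∀ q ∈ S, mul p q ∈ S) (hassoc : AssocOn S mul)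
    (hcont : ∀ q ∈ S, ContinuousOn (fun p => mul p q) S) : ∃ u ∈ S, mul u u = u := by
  let : Semigroup S :=
    { mul := fun p q => ⟨mul p q, hmul p p.2 q q.2⟩
      mul_assoc := fun p q r => Subtype.ext (hassoc p p.2 q q.2 r r.2) }
  have := isCompact_iff_compactSpace.mp hS
  have := hne.to_subtype
  obtain ⟨u, hu⟩ := exists_idempotent_of_compact_t2_of_continuous_mul_left fun q : S =>
    ((hcont q q.2).comp_continuous continuous_subtype_val Subtype.property).subtype_mk _
  exact ⟨u, u.2, congrArg Subtype.val hu⟩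

theorem IsMinimalLeftIdeal.exists_idempotent_mul_eq (hI : IsMinimalLeftIdeal C mul I)
    (hC : IsCompact C) (hassoc : AssocOn C mul)
    (hcont : ∀ q ∈ C, ContinuousOn (fun p => mul p q) C) {x : V} (hx : x ∈ I) :
    ∃ u ∈ I, mul u u = u ∧ mul u x = x := by
  obtain ⟨-, hIC, hideal⟩ := hI.1
  have hIcomp := hI.isCompact hC hassoc hcont
  have hstab : IsCompact (I ∩ (fun p => mul p x) ⁻¹' {x}) :=
    hIcomp.of_isClosed_subset (((hcont x (hIC hx)).mono hIC).preimage_isClosed_of_isClosed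
      hIcomp.isClosed isClosed_singleton) inter_subset_left
  obtain ⟨u, ⟨huI, hux⟩, huu⟩ := hstab.exists_idempotent (hI.exists_mul_eq hassoc hx hx)
    (fun p ⟨hpI, hpx⟩ q ⟨hqI, hqx⟩ => ⟨hideal p (hIC hpI) q hqI, by
      simp only [mem_preimage, mem_singleton_iff] at hpx hqx ⊢
      rw [hassoc p (hIC hpI) q (hIC hqI) x (hIC hx), hqx, hpx]⟩)
    (hassoc.mono (inter_subset_left.trans hIC))
    (fun q hq => (hcont q (hIC hq.1)).mono (inter_subset_left.trans hIC))
  exact ⟨u, huI, huu, hux⟩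

end Topology

theorem exists_idempotent_extreme_in_ideal_group_general
    {V : Type*} [AddCommGroup V] [Module ℝ V] [TopologicalSpace V]
    [IsTopologicalAddGroup V] [ContinuousSMul ℝ V] [T2Space V] [LocallyConvexSpace ℝ V]
    (C : Set V) (hCcomp : IsCompact C)
    (mul : V → V → V)
    (hassoc : ∀ p ∈ C, ∀ q ∈ C, ∀ r ∈ C, mul (mul p q) r = mul p (mul q r))
    (hcont : ∀ q ∈ C, ContinuousOn (fun p => mul p q) C)
    (haffr : ∀ p ∈ C, ∀ a ∈ C, ∀ b ∈ C, ∀ r : ℝ, 0 ≤ r → r ≤ 1 →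
      mul p (r • a + (1 - r) • b) = r • mul p a + (1 - r) • mul p b)
    (I : Set V) (hI : IsMinimalLeftIdeal C mul I) :
    ∃ u ∈ I, mul u u = u ∧ IsExtremePt ((fun p => mul u p) '' I) u := by
  obtain ⟨x, hx⟩ := (hI.isCompact hCcomp hassoc hcont).extremePoints_nonempty hI.1.1
  obtain ⟨u, huI, huu, hux⟩ := hI.exists_idempotent_mul_eq hCcomp hassoc hcont hx.1
  exact ⟨u, huI, huu, hI.isExtremePt_image_idempotent hassoc hx (haffr x (hI.1.2.1 hx.1))
    huI huu hux⟩

/-- Every minimal left ideal `I` of a compact convex left-continuous affine semigroup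
contains an idempotent `u` which is an extreme point of the ideal subgroup `u*I`. -/
theorem exists_idempotent_extreme_in_ideal_group
    {V : Type*} [AddCommGroup V] [Module ℝ V] [TopologicalSpace V]
    [IsTopologicalAddGroup V] [ContinuousSMul ℝ V] [T2Space V] [LocallyConvexSpace ℝ V]
    (C : Set V) (hCne : C.Nonempty) (hCcomp : IsCompact C) (hCconv : Convex ℝ C)
    (mul : V → V → V)
    (hclosed : ∀ p ∈ C, ∀ q ∈ C, mul p q ∈ C)
    (hassoc : ∀ p ∈ C, ∀ q ∈ C, ∀ r ∈ C, mul (mul p q) r = mul p (mul q r))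
    (hcont : ∀ q ∈ C, ContinuousOn (fun p => mul p q) C)
    (haffl : ∀ q ∈ C, ∀ a ∈ C, ∀ b ∈ C, ∀ r : ℝ, 0 ≤ r → r ≤ 1 →
      mul (r • a + (1 - r) • b) q = r • mul a q + (1 - r) • mul b q)
    (haffr : ∀ p ∈ C, ∀ a ∈ C, ∀ b ∈ C, ∀ r : ℝ, 0 ≤ r → r ≤ 1 →
      mul p (r • a + (1 - r) • b) = r • mul p a + (1 - r) • mul p b)
    (I : Set V) (hI : IsMinimalLeftIdeal C mul I) :
    ∃ u ∈ I, mul u u = u ∧ IsExtremePt ((fun p => mul u p) '' I) u :=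
  exists_idempotent_extreme_in_ideal_group_general C hCcomp mul hassoc hcont haffr I hI
end

section
/- Let C be a convex subset of a real vector space carrying a group operation * (associative, with identity element e and inverses) such that for every a ∈ C the left translation x ↦ a*x is affine. If the identity e is an extreme point of C, then C = {e}. -/
/-- If a convex subset `C` of a real vector space carries a group structure whose
left translations are affine and the identity `e` is an extreme point of `C`,
then `C = {e}`. -/
theorem convex_group_trivial_of_extreme_identity
    {V : Type*} [AddCommGroup V] [Module ℝ V]
    (C : Set V) (hCconv : Convex ℝ C)
    (mul : V → V → V) (e : V) (he : e ∈ C)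
    (hclosed : ∀ a ∈ C, ∀ b ∈ C, mul a b ∈ C)
    (hassoc : ∀ a ∈ C, ∀ b ∈ C, ∀ c ∈ C, mul (mul a b) c = mul a (mul b c))
    (hid : ∀ a ∈ C, mul e a = a ∧ mul a e = a)
    (hinv : ∀ a ∈ C, ∃ b ∈ C, mul a b = e ∧ mul b a = e)
    (haff : ∀ a ∈ C, ∀ x ∈ C, ∀ y ∈ C, ∀ r : ℝ, 0 ≤ r → r ≤ 1 →
      mul a (r • x + (1 - r) • y) = r • mul a x + (1 - r) • mul a y)
    (hext : IsExtremePt C e) :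
    C = {e} := by
  ext x
  simp only [Set.mem_singleton_iff]
  constructor
  · intro hx
    -- z = ½ e + ½ x ∈ C
    have hz : (1/2 : ℝ) • e + (1 - 1/2 : ℝ) • x ∈ C :=
      hCconv he hx (by norm_num) (by norm_num) (by ring)
    obtain ⟨w, hw, hwz1, hwz2⟩ := hinv _ hz
    -- e = mul w z = ½ w + ½ (mul w x)
    have hkey : e = (1/2 : ℝ) • w + (1 - 1/2 : ℝ) • mul w x := by
      rw [← hwz2, haff w hw e he x hx (1/2) (by norm_num) (by norm_num),
        (hid w hw).2]
    have hwx : mul w x ∈ C := hclosed w hw x hx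
    have hww : w = mul w x :=
      hext.2 w hw (mul w x) hwx (1/2) (by norm_num) (by norm_num) hkey
    obtain ⟨u, hu, huw1, huw2⟩ := hinv w hw
    calc x = mul (mul u w) x := by rw [huw2, (hid x hx).1]
      _ = mul u (mul w x) := hassoc u hu w hw x hx
      _ = mul u w := by rw [← hww]
      _ = e := huw2
  · rintro rfl; exact he
end

section
/- Let X be a nonempty compact Hausdorff totally disconnected topological space and let μ be a regular Borel probability measure on X. Then μ lies in the weak-* closure of the set of measures of the form (1/n)·(δ_{p₁} + … + δ_{pₙ}), where n ≥ 1 and p₁, …, pₙ are points of supp(μ) (uniform averages of Dirac measures at points of the support of μ). -/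
open MeasureTheory
open scoped NNReal

/-- The support of a measure: points all of whose open neighborhoods have
positive measure. -/
def measSupport {X : Type*} [TopologicalSpace X] [MeasurableSpace X]
    (μ : Measure X) : Set X :=
  {a : X | ∀ U : Set X, IsOpen U → a ∈ U → 0 < μ U}

/-!
Fix finitely many test functions `f` and `ε > 0`. Since `X` is profinite, some finite partition
of `X` into clopen cells makes every `f` vary by less than `ε / 2` on each cell. Pick a point of
the support in every cell of positive measure; then `∫ f dμ` is within `ε / 2` of
`∑ μ(cell) f(point)`. Rounding the weights `μ(cell)` to multiples `n_cell / N` with `∑ n = N`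
costs at most `2 · #cells / N` in total variation, and repeating each chosen point `n_cell` times
gives a uniform average of Dirac masses on the support whose integrals are `ε`-close to those of
`μ`.
-/

open Set Filter BoundedContinuousFunction

theorem MeasureTheory.ProbabilityMeasure.mem_closure_of_forall_exists_dist_integral_lt
    {Ω : Type*} [MeasurableSpace Ω] [TopologicalSpace Ω] [OpensMeasurableSpace Ω]
    {S : Set (ProbabilityMeasure Ω)} {μ : ProbabilityMeasure Ω}
    (h : ∀ (s : Finset (Ω →ᵇ ℝ)) (ε : ℝ), 0 < ε → ∃ ν ∈ S, ∀ f ∈ s,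
      dist (∫ x, f x ∂(ν : Measure Ω)) (∫ x, f x ∂(μ : Measure Ω)) < ε) :
    μ ∈ closure S := by
  classical
  choose ν hνS hν using
    fun i : Finset (Ω →ᵇ ℝ) × ℕ => h i.1 (1 / (i.2 + 1)) Nat.one_div_pos_of_nat
  refine mem_closure_of_tendsto (b := atTop) ?_ (Eventually.of_forall hνS)
  refine ProbabilityMeasure.tendsto_iff_forall_integral_tendsto.2 fun f => ?_
  refine Metric.tendsto_atTop.2 fun ε hε => ?_
  obtain ⟨K, hK⟩ := exists_nat_one_div_lt hε
  refine ⟨({f}, K), fun i hi => ?_⟩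
  calc _ < 1 / ((i.2 : ℝ) + 1) := hν i f (hi.1 (Finset.mem_singleton_self f))
    _ ≤ 1 / ((K : ℝ) + 1) := Nat.one_div_le_one_div hi.2
    _ < ε := hK

section Support

variable {X : Type*} [TopologicalSpace X] [MeasurableSpace X]

theorem measSupport_eq_support (μ : Measure X) : measSupport μ = μ.support := by
  ext x
  simp only [measSupport, Measure.support_eq_forall_isOpen, mem_ofPred_eq]
  exact forall_congr' fun U => Imp.swap

theorem IsCompact.inter_measSupport_nonempty {μ : Measure X} {K : Set X} (hK : IsCompact K)
    (hμK : μ K ≠ 0) : (K ∩ measSupport μ).Nonempty := by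
  rw [measSupport_eq_support, ← not_disjoint_iff_nonempty_inter]
  exact fun h => hμK (Measure.measure_eq_zero_of_isCompact_subset_compl_support hK
    h.subset_compl_right)

theorem exists_measSupport_mem_fiber_of_ne_zero [CompactSpace X] {ι : Type*} {μ : Measure X}
    [NeZero μ] {π : X → ι} (hπ : ∀ i, IsClosed (π ⁻¹' {i})) :
    ∃ q : ι → X, (∀ i, q i ∈ measSupport μ) ∧ ∀ i, μ (π ⁻¹' {i}) ≠ 0 → π (q i) = i := by
  have hq (i : ι) : ∃ x ∈ measSupport μ, μ (π ⁻¹' {i}) ≠ 0 → π x = i := by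
    by_cases hi : μ (π ⁻¹' {i}) = 0
    · obtain ⟨x, -, hx⟩ := isCompact_univ.inter_measSupport_nonempty (NeZero.ne (μ univ))
      exact ⟨x, hx, fun h => absurd hi h⟩
    · obtain ⟨x, hxi, hx⟩ := (hπ i).isCompact.inter_measSupport_nonempty hi
      exact ⟨x, hx, fun _ => hxi⟩
  choose q hq_supp hq_fiber using hq
  exact ⟨q, hq_supp, hq_fiber⟩

end Support

namespace DiscreteQuotient

variable {X : Type*} [TopologicalSpace X] [CompactSpace X] [T2Space X] [TotallyDisconnectedSpace X]

/-- Clopen sets separate points, so the open sets `{p | Q.proj p.1 ≠ Q.proj p.2}` form a directed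
cover of the off-diagonal. -/
theorem exists_proj_ne_of_isCompact {K : Set (X × X)} (hK : IsCompact K)
    (hKdiag : ∀ p ∈ K, p.1 ≠ p.2) : ∃ Q : DiscreteQuotient X, ∀ p ∈ K, Q.proj p.1 ≠ Q.proj p.2 :=
  hK.elim_directed_cover (fun Q : DiscreteQuotient X => {p | Q.proj p.1 ≠ Q.proj p.2})
    (fun Q => isOpen_ne_fun (Q.proj_continuous.comp continuous_fst)
      (Q.proj_continuous.comp continuous_snd))
    (fun p hp => mem_iUnion.2 <| not_forall.1 fun h => hKdiag p hp (eq_of_forall_proj_eq h))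
    (fun Q₁ Q₂ => ⟨Q₁ ⊓ Q₂,
      fun p hp h => hp (by rw [← ofLE_proj inf_le_left, h, ofLE_proj]),
      fun p hp h => hp (by rw [← ofLE_proj inf_le_right, h, ofLE_proj])⟩)

theorem exists_dist_lt_of_proj_eq {Y : Type*} [PseudoMetricSpace Y] {g : X → Y}
    (hg : Continuous g) {δ : ℝ} (hδ : 0 < δ) :
    ∃ Q : DiscreteQuotient X, ∀ x y, Q.proj x = Q.proj y → dist (g x) (g y) < δ := by
  obtain ⟨Q, hQ⟩ := exists_proj_ne_of_isCompact (K := {p | δ ≤ dist (g p.1) (g p.2)})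
    (isClosed_le continuous_const (by fun_prop)).isCompact
    (fun p hp hp' => by simp [hp', hδ.not_ge] at hp)
  exact ⟨Q, fun x y hxy => not_le.1 fun h => hQ (x, y) h hxy⟩

end DiscreteQuotient

theorem exists_nat_sum_eq_sum_abs_sub_le {ι : Type*} [Fintype ι] [Nonempty ι] {w : ι → ℝ}
    (hw0 : ∀ i, 0 ≤ w i) (hw1 : ∑ i, w i = 1) (N : ℕ) :
    ∃ n : ι → ℕ, ∑ i, n i = N ∧ ∑ i, |(n i : ℝ) - N * w i| ≤ 2 * Fintype.card ι := by
  classical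
  obtain ⟨i₀⟩ := ‹Nonempty ι›
  -- round every weight down, then give the whole deficit `d < card ι` to `i₀`
  set m : ι → ℕ := fun i => ⌊N * w i⌋₊
  have hm_le : ∀ i, (m i : ℝ) ≤ N * w i := fun i => Nat.floor_le (by have := hw0 i; positivity)
  have hm_gt : ∀ i, N * w i - m i < 1 := fun i => by linarith [Nat.lt_floor_add_one (N * w i)]
  have hsum_le : ∑ i, m i ≤ N := by
    have : (∑ i, m i : ℝ) ≤ N := by
      calc (∑ i, m i : ℝ) ≤ ∑ i, N * w i := Finset.sum_le_sum fun i _ => hm_le i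
        _ = N := by rw [← Finset.mul_sum, hw1, mul_one]
    exact_mod_cast this
  set d := N - ∑ i, m i
  have hd : (d : ℝ) = ∑ i, (N * w i - m i) := by
    rw [Nat.cast_sub hsum_le, Finset.sum_sub_distrib, ← Finset.mul_sum, hw1, mul_one]
    push_cast; rfl
  refine ⟨fun i => m i + if i = i₀ then d else 0, ?_, ?_⟩
  · rw [Finset.sum_add_distrib, Finset.sum_ite_eq', if_pos (Finset.mem_univ _)]
    omega
  · calc ∑ i, |((m i + if i = i₀ then d else 0 : ℕ) : ℝ) - N * w i|
        ≤ ∑ i, ((N * w i - m i) + if i = i₀ then (d : ℝ) else 0) := by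
          refine Finset.sum_le_sum fun i _ => ?_
          push_cast
          rw [abs_le]
          split_ifs <;> constructor <;> linarith [hm_le i, hm_gt i, (Nat.cast_nonneg d : (0:ℝ) ≤ d)]
      _ = 2 * d := by
          rw [Finset.sum_add_distrib, Finset.sum_ite_eq', if_pos (Finset.mem_univ _), ← hd]; ring
      _ ≤ 2 * Fintype.card ι := by
          have : (d : ℝ) ≤ Fintype.card ι := by
            rw [hd, Fintype.card_eq_sum_ones, Nat.cast_sum, Nat.cast_one]
            exact Finset.sum_le_sum fun i _ => (hm_gt i).le
          linarith

section AvgDiracs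

variable {X : Type*} [MeasurableSpace X]

def avgDiracs (T : Set X) : Set (ProbabilityMeasure X) :=
  {ν | ∃ n : ℕ, ∃ p : Fin (n + 1) → X, (∀ i, p i ∈ T) ∧
    (ν : Measure X) = ((n + 1 : ℝ≥0))⁻¹ • ∑ i, Measure.dirac (p i)}

theorem isProbabilityMeasure_inv_smul_sum_dirac {n : ℕ} (p : Fin (n + 1) → X) :
    IsProbabilityMeasure (((n + 1 : ℝ≥0))⁻¹ • ∑ i, Measure.dirac (p i)) := by
  constructor
  simp [ENNReal.smul_def, ENNReal.coe_inv n.cast_add_one_ne_zero]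
  exact ENNReal.inv_mul_cancel (by positivity) (by simp)

theorem integral_inv_smul_sum_dirac [TopologicalSpace X] [OpensMeasurableSpace X] {n : ℕ}
    (p : Fin (n + 1) → X) (f : X →ᵇ ℝ) :
    ∫ x, f x ∂(((n + 1 : ℝ≥0))⁻¹ • ∑ i, Measure.dirac (p i)) = (n + 1 : ℝ)⁻¹ * ∑ i, f (p i) := by
  rw [integral_smul_nnreal_measure, integral_finsetSum_measure fun i _ => f.integrable _]
  simp [integral_dirac' _ _ f.continuous.stronglyMeasurable, NNReal.smul_def]

theorem exists_mem_avgDiracs_integral_eq [TopologicalSpace X] [OpensMeasurableSpace X]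
    {T : Set X} {ι : Type*} [Fintype ι] {q : ι → X} (hq : ∀ i, q i ∈ T) {n : ι → ℕ} {N : ℕ}
    (hn : ∑ i, n i = N + 1) :
    ∃ ν ∈ avgDiracs T, ∀ f : X →ᵇ ℝ,
      ∫ x, f x ∂(ν : Measure X) = (N + 1 : ℝ)⁻¹ * ∑ i, n i * f (q i) := by
  have hcard : Fintype.card (Σ i, Fin (n i)) = N + 1 := by simp [hn]
  -- list `q i` exactly `n i` times
  set e := (Fintype.equivFinOfCardEq hcard).symm
  set p : Fin (N + 1) → X := fun k => q (e k).1
  have hsum (F : X → ℝ) : ∑ k, F (p k) = ∑ i, n i * F (q i) := by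
    rw [e.sum_comp fun x => F (q x.1), Fintype.sum_sigma]
    simp
  refine ⟨⟨_, isProbabilityMeasure_inv_smul_sum_dirac p⟩, ⟨N, p, fun k => hq _, rfl⟩, fun f => ?_⟩
  rw [ProbabilityMeasure.coe_mk, integral_inv_smul_sum_dirac, hsum]

end AvgDiracs

theorem sum_measureReal_preimage_singleton_eq_one {X ι : Type*} [MeasurableSpace X] [Fintype ι]
    {μ : Measure X} [IsProbabilityMeasure μ] {π : X → ι} (hπ : ∀ i, MeasurableSet (π ⁻¹' {i})) :
    ∑ i, μ.real (π ⁻¹' {i}) = 1 := by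
  rw [sum_measureReal_preimage_singleton (μ := μ) Finset.univ fun i _ => hπ i]
  simp

theorem abs_integral_sub_sum_measureReal_fiber_mul_le {X ι : Type*} [MeasurableSpace X]
    [Fintype ι] {μ : Measure X} [IsProbabilityMeasure μ] {π : X → ι}
    (hπ : ∀ i, MeasurableSet (π ⁻¹' {i})) {f : X → ℝ} (hf : Integrable f μ) (q : ι → X) {δ : ℝ}
    (hfq : ∀ i, μ (π ⁻¹' {i}) ≠ 0 → ∀ x ∈ π ⁻¹' {i}, |f x - f (q i)| ≤ δ) :
    |∫ x, f x ∂μ - ∑ i, μ.real (π ⁻¹' {i}) * f (q i)| ≤ δ := by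
  have hcell (i : ι) : ‖∫ x in π ⁻¹' {i}, (f x - f (q i)) ∂μ‖ ≤ δ * μ.real (π ⁻¹' {i}) := by
    refine norm_setIntegral_le_of_norm_le_const_ae (measure_lt_top μ _) ?_
    by_cases hi : μ (π ⁻¹' {i}) = 0
    · simp [Measure.restrict_eq_zero.2 hi]
    · exact ae_restrict_of_forall_mem (hπ i) (hfq i hi)
  have hsplit : ∫ x, f x ∂μ - ∑ i, μ.real (π ⁻¹' {i}) * f (q i)
      = ∑ i, ∫ x in π ⁻¹' {i}, (f x - f (q i)) ∂μ := by
    have hcover : ⋃ i, π ⁻¹' {i} = univ := by ext; simp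
    rw [← setIntegral_univ, ← hcover,
      integral_iUnion_fintype hπ (pairwise_disjoint_fiber π) fun i => hf.integrableOn,
      ← Finset.sum_sub_distrib]
    refine Finset.sum_congr rfl fun i _ => ?_
    rw [integral_sub hf.integrableOn (integrableOn_const (measure_ne_top μ _)), setIntegral_const,
      smul_eq_mul]
  calc _ ≤ ∑ i, δ * μ.real (π ⁻¹' {i}) := by
        rw [hsplit, ← Real.norm_eq_abs]
        exact (norm_sum_le _ _).trans (Finset.sum_le_sum fun i _ => hcell i)
    _ = δ := by
      rw [← Finset.mul_sum, sum_measureReal_preimage_singleton_eq_one hπ, mul_one]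

theorem abs_inv_mul_sum_mul_sub_sum_mul_le {ι : Type*} (t : Finset ι) {a b c : ι → ℝ} {M C : ℝ}
    (hM : 0 < M) (hc : ∀ i ∈ t, |c i| ≤ C) :
    |M⁻¹ * ∑ i ∈ t, a i * c i - ∑ i ∈ t, b i * c i|
      ≤ M⁻¹ * ((∑ i ∈ t, |a i - M * b i|) * C) := by
  have hdiff : M⁻¹ * ∑ i ∈ t, a i * c i - ∑ i ∈ t, b i * c i
      = M⁻¹ * ∑ i ∈ t, (a i - M * b i) * c i := by
    simp only [sub_mul, Finset.sum_sub_distrib, mul_sub, Finset.mul_sum]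
    congr 1
    exact Finset.sum_congr rfl fun i _ => by field_simp
  rw [hdiff, abs_mul, abs_of_pos (inv_pos.2 hM), Finset.sum_mul]
  gcongr
  refine (Finset.abs_sum_le_sum_abs _ _).trans (Finset.sum_le_sum fun i hi => ?_)
  rw [abs_mul]
  exact mul_le_mul_of_nonneg_left (hc i hi) (abs_nonneg _)

theorem exists_mem_avgDiracs_measSupport_dist_integral_lt {X : Type*} [TopologicalSpace X]
    [CompactSpace X] [T2Space X] [TotallyDisconnectedSpace X] [Nonempty X] [MeasurableSpace X]
    [OpensMeasurableSpace X] (μ : ProbabilityMeasure X) (s : Finset (X →ᵇ ℝ)) {ε : ℝ}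
    (hε : 0 < ε) :
    ∃ ν ∈ avgDiracs (measSupport (μ : Measure X)), ∀ f ∈ s,
      dist (∫ x, f x ∂(ν : Measure X)) (∫ x, f x ∂(μ : Measure X)) < ε := by
  -- one quotient for all `f ∈ s`: view `s` as a single map into the sup-normed space `s → ℝ`
  obtain ⟨Q, hQ⟩ := DiscreteQuotient.exists_dist_lt_of_proj_eq
    (g := fun x (f : s) => (f : X →ᵇ ℝ) x) (by fun_prop) (half_pos hε)
  have hosc : ∀ f ∈ s, ∀ x y, Q.proj x = Q.proj y → |f x - f y| ≤ ε / 2 := fun f hf x y hxy =>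
    (dist_le_pi_dist (fun f : s => (f : X →ᵇ ℝ) x) _ ⟨f, hf⟩).trans (hQ x y hxy).le
  have := Fintype.ofFinite Q
  have hcell_meas (i : Q) : MeasurableSet (Q.proj ⁻¹' {i}) := (Q.isOpen_preimage {i}).measurableSet
  set w : Q → ℝ := fun i => (μ : Measure X).real (Q.proj ⁻¹' {i})
  obtain ⟨q, hq_supp, hq_cell⟩ :=
    exists_measSupport_mem_fiber_of_ne_zero (μ := (μ : Measure X)) fun i => Q.isClosed_preimage {i}
  obtain ⟨N, hN⟩ : ∃ N : ℕ, ∀ f ∈ s, (N + 1 : ℝ)⁻¹ * (2 * Fintype.card Q * ‖f‖) < ε / 2 := by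
    refine ((eventually_all_finset s).2 fun f _ => ?_).exists (f := atTop)
    refine Tendsto.eventually_lt_const (half_pos hε) ?_
    simpa using tendsto_one_div_add_atTop_nhds_zero_nat.mul_const (2 * Fintype.card Q * ‖f‖)
  obtain ⟨n, hn_sum, hn_err⟩ := exists_nat_sum_eq_sum_abs_sub_le (w := w)
    (fun _ => measureReal_nonneg)
    (sum_measureReal_preimage_singleton_eq_one hcell_meas) (N + 1)
  obtain ⟨ν, hν, hν_int⟩ := exists_mem_avgDiracs_integral_eq hq_supp hn_sum
  refine ⟨ν, hν, fun f hf => ?_⟩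
  have hcells := abs_integral_sub_sum_measureReal_fiber_mul_le
    hcell_meas (f.integrable (μ : Measure X)) q
    fun i hi x hx => hosc f hf x (q i) (hx.trans (hq_cell i hi).symm)
  have hround : |(N + 1 : ℝ)⁻¹ * ∑ i, n i * f (q i) - ∑ i, w i * f (q i)|
      ≤ (N + 1 : ℝ)⁻¹ * (2 * Fintype.card Q * ‖f‖) := by
    refine (abs_inv_mul_sum_mul_sub_sum_mul_le Finset.univ (by positivity)
      fun i _ => f.norm_coe_le_norm (q i)).trans ?_
    gcongr
    exact_mod_cast hn_err
  rw [Real.dist_eq, hν_int]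
  calc _ ≤ |(N + 1 : ℝ)⁻¹ * ∑ i, n i * f (q i) - ∑ i, w i * f (q i)|
        + |∑ i, w i * f (q i) - ∫ x, f x ∂(μ : Measure X)| := abs_sub_le _ _ _
    _ < ε / 2 + ε / 2 := add_lt_add_of_lt_of_le (hround.trans_lt (hN f hf))
        ((abs_sub_comm _ _).trans_le hcells)
    _ = ε := add_halves ε

theorem measure_mem_closure_avg_diracs_of_support_general
    {X : Type*} [TopologicalSpace X] [CompactSpace X] [T2Space X]
    [TotallyDisconnectedSpace X] [Nonempty X]
    [MeasurableSpace X] [BorelSpace X]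
    (μ : ProbabilityMeasure X) :
    μ ∈ closure {ν : ProbabilityMeasure X |
      ∃ n : ℕ, ∃ p : Fin (n + 1) → X,
        (∀ i, p i ∈ measSupport (μ : Measure X)) ∧
        (ν : Measure X) = ((n + 1 : ℝ≥0))⁻¹ • ∑ i, Measure.dirac (p i)} :=
  ProbabilityMeasure.mem_closure_of_forall_exists_dist_integral_lt fun s _ hε =>
    exists_mem_avgDiracs_measSupport_dist_integral_lt μ s hε

/-- On a nonempty compact Hausdorff totally disconnected space, every regular Borel
probability measure is a weak-* limit of uniform averages of Dirac measures at points
of its support. -/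
theorem measure_mem_closure_avg_diracs_of_support
    {X : Type*} [TopologicalSpace X] [CompactSpace X] [T2Space X]
    [TotallyDisconnectedSpace X] [Nonempty X]
    [MeasurableSpace X] [BorelSpace X]
    (μ : ProbabilityMeasure X) (hreg : (μ : Measure X).Regular) :
    μ ∈ closure {ν : ProbabilityMeasure X |
      ∃ n : ℕ, ∃ p : Fin (n + 1) → X,
        (∀ i, p i ∈ measSupport (μ : Measure X)) ∧
        (ν : Measure X) = ((n + 1 : ℝ≥0))⁻¹ • ∑ i, Measure.dirac (p i)} :=
  measure_mem_closure_avg_diracs_of_support_general μ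
end

section
/- Let S be a compact Hausdorff left-topological semigroup, let I be a minimal left ideal of S, let u ∈ I be an idempotent (u·u = u), and let p ∈ I. Then the map x ↦ x·p restricted to u·I := {u·q : q ∈ I} is a continuous bijection from u·I onto u·I, and moreover x·p = x·(u·p) for every x ∈ u·I. -/
/-- A left ideal of a semigroup: a nonempty subset closed under left multiplication. -/
def IsLeftIdealS {S : Type*} [Semigroup S] (I : Set S) : Prop :=
  I.Nonempty ∧ ∀ s : S, ∀ i ∈ I, s * i ∈ I

/-- A minimal left ideal of a semigroup. -/
def IsMinimalLeftIdealS {S : Type*} [Semigroup S] (I : Set S) : Prop :=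
  IsLeftIdealS I ∧ ∀ J : Set S, IsLeftIdealS J → J ⊆ I → J = I

/-- In a minimal left ideal, every element generates the whole ideal. -/
lemma exists_mul_eq_of_minimal {S : Type*} [Semigroup S] {I : Set S}
    (hI : IsMinimalLeftIdealS I) {g y : S} (hg : g ∈ I) (hy : y ∈ I) :
    ∃ s : S, s * g = y := by
  have hJ : IsLeftIdealS {x : S | ∃ s : S, s * g = x} := by
    constructor
    · exact ⟨g * g, g, rfl⟩
    · rintro s x ⟨t, rfl⟩
      exact ⟨s * t, (mul_assoc s t g)⟩
  have hsub : {x : S | ∃ s : S, s * g = x} ⊆ I := by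
    rintro x ⟨s, rfl⟩
    exact hI.1.2 s g hg
  have := hI.2 _ hJ hsub
  rw [← this] at hy
  exact hy

/-- In a compact Hausdorff left-topological semigroup, if `I` is a minimal left ideal,
`u ∈ I` an idempotent and `p ∈ I`, then right multiplication by `p` restricted to the
ideal subgroup `u·I` is a continuous bijection of `u·I` onto itself, and coincides on
`u·I` with right multiplication by `u·p`. -/
theorem ideal_group_right_mul_bijective
    {S : Type*} [Semigroup S] [TopologicalSpace S] [CompactSpace S] [T2Space S]
    (hcont : ∀ q : S, Continuous fun p : S => p * q)
    (I : Set S) (hI : IsMinimalLeftIdealS I)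
    (u : S) (hu : u ∈ I) (huid : u * u = u)
    (p : S) (hp : p ∈ I) :
    Set.BijOn (fun x => x * p) ((fun q => u * q) '' I) ((fun q => u * q) '' I) ∧
    ContinuousOn (fun x => x * p) ((fun q => u * q) '' I) ∧
    ∀ x ∈ (fun q => u * q) '' I, x * p = x * (u * p) := by
  set G := (fun q => u * q) '' I with hGdef
  have hGI : ∀ x ∈ G, x ∈ I := by
    rintro x ⟨q, hq, rfl⟩
    exact hI.1.2 u q hq
  have hmem : ∀ q ∈ I, u * q ∈ G := fun q hq => ⟨q, hq, rfl⟩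
  have hid : ∀ x ∈ G, u * x = x := by
    rintro x ⟨q, hq, rfl⟩
    show u * (u * q) = u * q
    rw [← mul_assoc, huid]
  have hGmul : ∀ x ∈ G, ∀ y ∈ I, x * y ∈ G := by
    rintro x ⟨q, hq, rfl⟩ y hy
    exact ⟨q * y, hI.1.2 q y hy, (mul_assoc u q y).symm⟩
  have hlinv : ∀ x ∈ G, ∃ y ∈ G, y * x = u := by
    intro x hx
    obtain ⟨s, hs⟩ := exists_mul_eq_of_minimal hI (hGI x hx) hu
    refine ⟨u * (s * u), hmem _ (hI.1.2 s u hu), ?_⟩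
    calc u * (s * u) * x = u * (s * (u * x)) := by simp [mul_assoc]
      _ = u * (s * x) := by rw [hid x hx]
      _ = u * u := by rw [hs]
      _ = u := huid
  have hinv : ∀ x ∈ G, ∃ y ∈ G, y * x = u ∧ x * y = u := by
    intro x hx
    obtain ⟨y, hy, hyx⟩ := hlinv x hx
    obtain ⟨z, hz, hzy⟩ := hlinv y hy
    refine ⟨y, hy, hyx, ?_⟩
    calc x * y = u * x * y := by rw [hid x hx]
      _ = (z * y) * x * y := by rw [hzy]
      _ = z * ((y * x) * y) := by simp [mul_assoc]
      _ = z * (u * y) := by rw [hyx]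
      _ = z * y := by rw [hid y hy]
      _ = u := hzy
  have hrid : ∀ x ∈ G, x * u = x := by
    intro x hx
    obtain ⟨y, hy, hyx, hxy⟩ := hinv x hx
    calc x * u = x * (y * x) := by rw [hyx]
      _ = (x * y) * x := (mul_assoc x y x).symm
      _ = u * x := by rw [hxy]
      _ = x := hid x hx
  have heq : ∀ x ∈ G, x * p = x * (u * p) := by
    intro x hx
    rw [← mul_assoc, hrid x hx]
  obtain ⟨a', ha'G, ha'l, ha'r⟩ := hinv (u * p) (hmem p hp)
  have hmaps : Set.MapsTo (fun x => x * p) G G := by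
    intro x hx
    exact hGmul x hx p hp
  refine ⟨⟨hmaps, ?_, ?_⟩, (hcont p).continuousOn, heq⟩
  · intro x hx y hy hxy
    simp only at hxy
    have h2 : x * (u * p) * a' = y * (u * p) * a' := by
      rw [← heq x hx, ← heq y hy, hxy]
    rwa [mul_assoc, ha'r, mul_assoc, ha'r, hrid x hx, hrid y hy] at h2
  · intro y hy
    have hyG : y * a' ∈ G := hGmul y hy a' (hGI a' ha'G)
    refine ⟨y * a', hyG, ?_⟩
    show (y * a') * p = y
    rw [heq _ hyG, mul_assoc, ha'l, hrid y hy]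
end
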